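/- arXiv:1508.00287 — 5 statements merged into one kernel-verified Lean document; each statement's English description precedes it below -/
import Mathlib

section
/- For $0 \leq r \leq 1$ and all real $\theta$, the sum $P(r,\theta) := \sum_{j=1}^J (1 - j/(J+1)) r^j \cos(j\theta)$ satisfies $P(r,\theta) \geq -1/2$. -/
open Finset Complex

/-!
With `z = r e^{iθ}` and `G m = ∑_{k ≤ m} z^k`, the recursion `G (m+1) = z G m + 1` telescopes to
`|G J|² + (1 - |z|²) ∑_{m < J} |G m|² = (J + 1) (1 + 2 P(r,θ))`,
whose left side is nonnegative when `|z| ≤ 1`.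
-/

theorem Finset.sum_range_sum_range_succ {R : Type*} [Ring R] (f : ℕ → R) (n : ℕ) :
    ∑ m ∈ range n, ∑ k ∈ range (m + 1), f k = ∑ k ∈ range n, ((n : R) - k) * f k := by
  induction n with
  | zero => simp
  | succ n ih =>
    rw [sum_range_succ (fun m => ∑ k ∈ range (m + 1), f k), ih, sum_range_succ f,
      sum_range_succ (fun k => (((n + 1 : ℕ) : R) - k) * f k), ← add_assoc, ← sum_add_distrib]
    push_cast
    congr 1
    · exact sum_congr rfl fun k _ => by rw [add_sub_right_comm, add_mul, one_mul]
    · rw [add_sub_cancel_left, one_mul]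

namespace Complex

theorem re_ofReal_mul_exp_mul_I_pow (r θ : ℝ) (n : ℕ) :
    ((r * exp (θ * I)) ^ n).re = r ^ n * Real.cos (n * θ) := by
  rw [mul_pow, ← ofReal_pow, ← exp_nat_mul, ← mul_assoc, ← ofReal_natCast, ← ofReal_mul,
    re_ofReal_mul, exp_ofReal_mul_I_re]

theorem normSq_geom_sum_add_one_sub_normSq_mul (z : ℂ) (n : ℕ) :
    normSq (∑ k ∈ range (n + 1), z ^ k)
        + (1 - normSq z) * ∑ m ∈ range n, normSq (∑ k ∈ range (m + 1), z ^ k)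
      = n + 1 + 2 * ∑ m ∈ range n, (z * ∑ k ∈ range (m + 1), z ^ k).re := by
  induction n with
  | zero => simp
  | succ n ih =>
    have hstep : normSq (∑ k ∈ range (n + 2), z ^ k)
        = normSq z * normSq (∑ k ∈ range (n + 1), z ^ k) + 1
          + 2 * (z * ∑ k ∈ range (n + 1), z ^ k).re := by
      rw [geom_sum_succ, normSq_add, normSq_mul]
      simp
    rw [hstep, sum_range_succ (fun m => normSq (∑ k ∈ range (m + 1), z ^ k)),
      sum_range_succ (fun m => (z * ∑ k ∈ range (m + 1), z ^ k).re)]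
    push_cast
    linear_combination ih

theorem fejer_sum_nonneg {z : ℂ} (hz : ‖z‖ ≤ 1) (n : ℕ) :
    0 ≤ n + 1 + 2 * ∑ k ∈ range n, ((n : ℝ) - k) * (z ^ (k + 1)).re := by
  have hsum : ∑ m ∈ range n, (z * ∑ k ∈ range (m + 1), z ^ k).re
      = ∑ k ∈ range n, ((n : ℝ) - k) * (z ^ (k + 1)).re := by
    simp_rw [mul_sum, re_sum, ← pow_succ']
    exact sum_range_sum_range_succ (fun k => (z ^ (k + 1)).re) n
  have hnormSq : 0 ≤ 1 - normSq z := by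
    rw [normSq_eq_norm_sq, sub_nonneg]
    exact pow_le_one₀ (norm_nonneg z) hz
  rw [← hsum, ← normSq_geom_sum_add_one_sub_normSq_mul]
  exact add_nonneg (normSq_nonneg _)
    (mul_nonneg hnormSq (sum_nonneg fun m _ => normSq_nonneg _))

end Complex

theorem power_sum_kernel_lower_bound_general (J : ℕ) (r θ : ℝ)
    (hr0 : 0 ≤ r) (hr1 : r ≤ 1) :
    (∑ j ∈ Finset.Icc 1 J, (1 - (j : ℝ) / (J + 1)) * r ^ j * Real.cos (j * θ))
      ≥ -(1 / 2) := by
  set z : ℂ := r * exp (θ * I)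
  have hz : ‖z‖ ≤ 1 := by
    rwa [norm_mul, norm_exp_ofReal_mul_I, mul_one, norm_real, Real.norm_of_nonneg hr0]
  have hJ : (0 : ℝ) < J + 1 := by positivity
  have hP : ∑ j ∈ Icc 1 J, (1 - (j : ℝ) / (J + 1)) * r ^ j * Real.cos (j * θ)
      = (∑ k ∈ range J, ((J : ℝ) - k) * (z ^ (k + 1)).re) / (J + 1) := by
    rw [sum_div, ← Ico_add_one_right_eq_Icc, sum_Ico_eq_sum_range, add_tsub_cancel_right]
    refine sum_congr rfl fun k _ => ?_
    rw [re_ofReal_mul_exp_mul_I_pow, add_comm 1 k]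
    field_simp
    push_cast
    ring
  rw [hP, ge_iff_le, le_div_iff₀ hJ]
  linarith [fejer_sum_nonneg hz J]

/-- For a positive integer `J`, `P(r,θ) = ∑_{j=1}^J (1 - j/(J+1)) r^j cos(jθ)`
satisfies `P(r,θ) ≥ -1/2` for `0 ≤ r ≤ 1` and all `θ`. -/
theorem power_sum_kernel_lower_bound (J : ℕ) (hJ : 1 ≤ J) (r θ : ℝ)
    (hr0 : 0 ≤ r) (hr1 : r ≤ 1) :
    (∑ j ∈ Finset.Icc 1 J, (1 - (j : ℝ) / (J + 1)) * r ^ j * Real.cos (j * θ))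
      ≥ -(1 / 2) :=
  power_sum_kernel_lower_bound_general J r θ hr0 hr1
end

section
/- Let $\epsilon > 0$ and let $(z_n)_{n\geq 1}$ be a sequence of complex numbers with $z_1 \neq 0$, $|z_n| \leq |z_1|$ for all $n$, and $\sum_n |z_n| < \infty$. Set $s_m = \sum_{n=1}^{\infty} z_n^m$ and $M = |z_1|^{-1} \sum_n |z_n|$. Then there exists a positive integer $m_0$ with $1 \leq m_0 \leq (12+\epsilon) M$ such that $\Re(s_{m_0}) \geq \frac{\epsilon}{48+5\epsilon} |z_1|^{m_0}$. -/
/-!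
Normalise to `w k = z (k + 1) / ‖z 1‖`, so that `‖w 0‖ = 1`, `‖w k‖ ≤ 1` and `M = ∑ ‖w k‖`, and
write `sₘ = ∑ w k ^ m`. Let `Φ(u) = ∑_{m=1}^N λₘ uᵐ`, `λₘ = 1 - m / (N + 1)`, be the Fejér
polynomial. On the unit circle `1 + 2 Re Φ` is the Fejér kernel, hence `Re Φ ≥ -1/2` on the closed
disc, and Schwarz's lemma upgrades this to `Re Φ(u) ≥ -‖u‖`. The same holds for
`f(u) = (Φ(u w₀) + Φ(u w̄₀)) / 2 = ∑ λₘ Re(w₀ᵐ) uᵐ`. Summing over the `w k` gives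
`∑ λₘ Re sₘ ≥ -M` and, since `f(w₀) = (Φ(w₀²) + Φ(1)) / 2` has real part at least `N/4 - 1/4`,
`∑ λₘ Re(w₀ᵐ) Re sₘ ≥ N/4 + 3/4 - M`. If `Re sₘ ≤ c` for all `1 ≤ m ≤ N`, the latter sum is at most
`cN - ∑ λₘ Re sₘ ≤ cN + M`, so `(1 - 4c) N + 3 ≤ 8M`; this fails for `N = ⌊(12 + ε) M⌋` and
`c = ε / (48 + 5ε)`.
-/

open Finset Metric Complex ComplexConjugate

lemma le_re_of_forall_mem_frontier_le_re {U : Set ℂ} (hU : Bornology.IsBounded U) {F : ℂ → ℂ}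
    (hF : DiffContOnCl ℂ F U) {a : ℝ} (h : ∀ z ∈ frontier U, a ≤ (F z).re) {z : ℂ}
    (hz : z ∈ closure U) : a ≤ (F z).re := by
  have key : ‖exp (-F z)‖ ≤ Real.exp (-a) :=
    norm_le_of_forall_mem_frontier_norm_le hU (differentiable_exp.comp_diffContOnCl hF.neg)
      (fun w hw => by simpa [norm_exp] using h w hw) hz
  simpa [norm_exp] using key

lemma norm_le_norm_one_add {w : ℂ} (hw : -(1 / 2) ≤ w.re) : ‖w‖ ≤ ‖1 + w‖ := by
  rw [← sq_le_sq₀ (norm_nonneg _) (norm_nonneg _), Complex.sq_norm, Complex.sq_norm,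
    normSq_apply, normSq_apply]
  simp only [add_re, one_re, add_im, one_im, zero_add]
  nlinarith

lemma neg_norm_le_re_div_one_sub {w : ℂ} (hw : ‖w‖ < 1) : -‖w‖ ≤ (w / (1 - w)).re := by
  have hx : |w.re| ≤ ‖w‖ := abs_re_le_norm w
  have hs : ‖w‖ ^ 2 = w.re ^ 2 + w.im ^ 2 := by rw [Complex.sq_norm, normSq_apply]; ring
  have hpos : 0 < normSq (1 - w) := normSq_pos.mpr (sub_ne_zero.mpr (fun h => by simp [← h] at hw))
  rw [div_re, ← add_div, le_div_iff₀ hpos, normSq_apply]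
  simp only [sub_re, one_re, sub_im, one_im, zero_sub]
  rcases abs_le.mp hx with ⟨h1, h2⟩
  nlinarith [norm_nonneg w]

/-- `F / (1 + F)` maps the disc to itself, so Schwarz's lemma applies to it. -/
lemma neg_norm_le_re_of_neg_half_le_re {F : ℂ → ℂ} (hF : DifferentiableOn ℂ F (ball 0 1))
    (hF0 : F 0 = 0) (hre : ∀ v ∈ closedBall (0 : ℂ) 1, -(1 / 2) ≤ (F v).re) {u : ℂ}
    (hu : u ∈ closedBall (0 : ℂ) 1) : -‖u‖ ≤ (F u).re := by
  rcases (mem_closedBall_zero_iff.mp hu).lt_or_eq with hu1 | hu1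
  swap
  · linarith [hre u hu]
  have hne : ∀ v ∈ ball (0 : ℂ) 1, 1 + F v ≠ 0 := fun v hv h => by
    have h' := congr_arg re h
    simp only [add_re, one_re, zero_re] at h'
    linarith [hre v (ball_subset_closedBall hv)]
  set g : ℂ → ℂ := fun v => F v / (1 + F v)
  have hg : Set.MapsTo g (ball 0 1) (closedBall (g 0) 1) := fun v hv => by
    simp only [g, hF0, zero_div, mem_closedBall_zero_iff, norm_div]
    exact div_le_one_of_le₀ (norm_le_norm_one_add (hre v (ball_subset_closedBall hv)))
      (norm_nonneg _)
  have hgu : ‖g u‖ ≤ ‖u‖ := by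
    simpa [g, hF0] using dist_le_div_mul_dist_of_mapsTo_ball
      (hF.div ((differentiableOn_const 1).add hF) hne) hg (mem_ball_zero_iff.mpr hu1)
  have hFu : F u = g u / (1 - g u) := by
    have := hne u (mem_ball_zero_iff.mpr hu1)
    simp only [g]
    field_simp
    ring
  rw [hFu]
  linarith [neg_norm_le_re_div_one_sub (hgu.trans_lt hu1)]

noncomputable def fejerCoeff (N m : ℕ) : ℝ := 1 - m / (N + 1)

noncomputable def fejerPoly (N : ℕ) (u : ℂ) : ℂ := ∑ m ∈ Icc 1 N, (fejerCoeff N m : ℂ) * u ^ m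

lemma fejerCoeff_nonneg {N m : ℕ} (hm : m ≤ N) : 0 ≤ fejerCoeff N m := by
  rw [fejerCoeff, sub_nonneg, div_le_one (by positivity)]
  exact_mod_cast hm.trans N.le_succ

lemma add_two_mul_fejerCoeff_succ (N m : ℕ) :
    (N + 2) * fejerCoeff (N + 1) m = (N + 1) * fejerCoeff N m + 1 := by
  simp only [fejerCoeff]; push_cast; field_simp; ring

lemma add_two_mul_fejerPoly_succ (N : ℕ) (u : ℂ) :
    (N + 2) * fejerPoly (N + 1) u = (N + 1) * fejerPoly N u + ∑ m ∈ Icc 1 (N + 1), u ^ m := by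
  have hlast : fejerCoeff N (N + 1) = 0 := by
    rw [fejerCoeff, Nat.cast_succ, div_self (by positivity), sub_self]
  calc (N + 2) * fejerPoly (N + 1) u
      = ∑ m ∈ Icc 1 (N + 1), (((N + 1) * fejerCoeff N m + 1 : ℝ) : ℂ) * u ^ m := by
        simp only [fejerPoly, mul_sum, ← add_two_mul_fejerCoeff_succ, ← mul_assoc]; push_cast; rfl
    _ = (N + 1) * ∑ m ∈ Icc 1 (N + 1), (fejerCoeff N m : ℂ) * u ^ m
          + ∑ m ∈ Icc 1 (N + 1), u ^ m := by
        simp only [mul_sum, ← sum_add_distrib]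
        exact sum_congr rfl fun m _ => by push_cast; ring
    _ = (N + 1) * fejerPoly N u + ∑ m ∈ Icc 1 (N + 1), u ^ m := by
        rw [sum_Icc_succ_top (by omega), hlast, fejerPoly]; simp

lemma fejerPoly_zero_right (N : ℕ) : fejerPoly N 0 = 0 :=
  sum_eq_zero fun m hm => by simp [Nat.one_le_iff_ne_zero.mp (mem_Icc.mp hm).1]

lemma fejerPoly_one_right (N : ℕ) : fejerPoly N 1 = N / 2 := by
  induction N with
  | zero => simp [fejerPoly]
  | succ N ih =>
    have h := add_two_mul_fejerPoly_succ N 1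
    simp only [ih, one_pow, sum_const, Nat.card_Icc, add_tsub_cancel_right, nsmul_one] at h
    refine mul_left_cancel₀ (by norm_cast : (N + 2 : ℂ) ≠ 0) (h.trans ?_)
    push_cast
    ring

lemma sum_fejerCoeff (N : ℕ) : ∑ m ∈ Icc 1 N, fejerCoeff N m = N / 2 := by
  simpa [fejerPoly, re_sum, re_ofReal_mul] using congr_arg re (fejerPoly_one_right N)

@[fun_prop]
lemma differentiable_fejerPoly (N : ℕ) : Differentiable ℂ (fejerPoly N) :=
  Differentiable.fun_sum fun m _ => (differentiable_const _).mul (differentiable_pow m)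

lemma mul_one_add_sum_Icc_pow (v : ℂ) (n : ℕ) :
    v * (1 + ∑ m ∈ Icc 1 n, v ^ m) = ∑ m ∈ Icc 1 (n + 1), v ^ m := by
  induction n with
  | zero => simp
  | succ n ih =>
    rw [sum_Icc_succ_top (b := n) (by omega)] at ih ⊢
    rw [sum_Icc_succ_top (b := n + 1) (by omega), sum_Icc_succ_top (b := n) (by omega)]
    linear_combination ih

lemma conj_one_add_sum_Icc_pow_mul_pow {v : ℂ} (hv : ‖v‖ = 1) (n : ℕ) :
    conj (1 + ∑ m ∈ Icc 1 n, v ^ m) * v ^ (n + 1) = ∑ m ∈ Icc 1 (n + 1), v ^ m := by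
  induction n with
  | zero => simp
  | succ n ih =>
    have hunit : conj (v ^ (n + 1)) * v ^ (n + 1) = 1 := by
      rw [mul_comm, mul_conj, normSq_eq_norm_sq, norm_pow, hv]; simp
    calc conj (1 + ∑ m ∈ Icc 1 (n + 1), v ^ m) * v ^ (n + 1 + 1)
        = (conj (1 + ∑ m ∈ Icc 1 n, v ^ m) * v ^ (n + 1)
            + conj (v ^ (n + 1)) * v ^ (n + 1)) * v := by
          rw [sum_Icc_succ_top (b := n) (by omega), ← add_assoc, map_add]; ring
      _ = v * (1 + ∑ m ∈ Icc 1 (n + 1), v ^ m) := by rw [ih, hunit]; ring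
      _ = ∑ m ∈ Icc 1 (n + 1 + 1), v ^ m := mul_one_add_sum_Icc_pow v (n + 1)

/-- Fejér's identity: `1 + 2 Re (fejerPoly N v)` is the Fejér kernel at `v`. -/
lemma normSq_one_add_sum_Icc_pow {v : ℂ} (hv : ‖v‖ = 1) (N : ℕ) :
    normSq (1 + ∑ m ∈ Icc 1 N, v ^ m) = (N + 1) * (1 + 2 * (fejerPoly N v).re) := by
  induction N with
  | zero => simp [fejerPoly]
  | succ N ih =>
    have hcross : ((1 + ∑ m ∈ Icc 1 N, v ^ m) * conj (v ^ (N + 1))).re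
        = (∑ m ∈ Icc 1 (N + 1), v ^ m).re := by
      rw [← conj_one_add_sum_Icc_pow_mul_pow hv, ← conj_re, map_mul, conj_conj]
    have hrec := congr_arg re (add_two_mul_fejerPoly_succ N v)
    have hpow : normSq (v ^ (N + 1)) = 1 := by simp [normSq_eq_norm_sq, hv]
    rw [sum_Icc_succ_top (by omega), ← add_assoc, normSq_add, ih, hcross, hpow]
    simp only [mul_re, add_re, add_im, natCast_re, natCast_im, re_ofNat, im_ofNat, one_re,
      one_im, add_zero, zero_mul, sub_zero] at hrec
    push_cast
    linarith

lemma neg_half_le_re_fejerPoly_of_norm_eq_one {v : ℂ} (hv : ‖v‖ = 1) (N : ℕ) :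
    -(1 / 2) ≤ (fejerPoly N v).re := by
  have h := normSq_one_add_sum_Icc_pow hv N ▸ normSq_nonneg _
  have : 0 ≤ 1 + 2 * (fejerPoly N v).re := nonneg_of_mul_nonneg_right h (by positivity)
  linarith

lemma neg_half_le_re_fejerPoly (N : ℕ) {u : ℂ} (hu : u ∈ closedBall (0 : ℂ) 1) :
    -(1 / 2) ≤ (fejerPoly N u).re := by
  refine le_re_of_forall_mem_frontier_le_re isBounded_ball
    (differentiable_fejerPoly N).diffContOnCl (fun v hv => ?_) (by rwa [closure_ball _ one_ne_zero])
  rw [frontier_ball _ one_ne_zero, mem_sphere_zero_iff_norm] at hv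
  exact neg_half_le_re_fejerPoly_of_norm_eq_one hv N

lemma fejerPoly_mul_add_fejerPoly_mul_conj (N : ℕ) (u v : ℂ) :
    (fejerPoly N (u * v) + fejerPoly N (u * conj v)) / 2
      = ∑ m ∈ Icc 1 N, ((fejerCoeff N m * (v ^ m).re : ℝ) : ℂ) * u ^ m := by
  rw [fejerPoly, fejerPoly, ← sum_add_distrib, sum_div]
  refine sum_congr rfl fun m _ => ?_
  rw [mul_pow, mul_pow, ← map_pow, ofReal_mul, re_eq_add_conj]
  ring

lemma sum_fejerCoeff_mul_mul_le {N : ℕ} {c : ℝ} (hc : 0 ≤ c) {γ t : ℕ → ℝ}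
    (hγ : ∀ m, |γ m| ≤ 1) (ht : ∀ m ∈ Icc 1 N, t m ≤ c) :
    ∑ m ∈ Icc 1 N, fejerCoeff N m * γ m * t m ≤ c * N - ∑ m ∈ Icc 1 N, fejerCoeff N m * t m := by
  calc ∑ m ∈ Icc 1 N, fejerCoeff N m * γ m * t m
      ≤ ∑ m ∈ Icc 1 N, fejerCoeff N m * (2 * c - t m) := by
        refine sum_le_sum fun m hm => ?_
        rw [mul_assoc]
        refine mul_le_mul_of_nonneg_left ?_ (fejerCoeff_nonneg (mem_Icc.mp hm).2)
        obtain ⟨h1, h2⟩ := abs_le.mp (hγ m)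
        nlinarith [ht m hm]
    _ = 2 * c * ∑ m ∈ Icc 1 N, fejerCoeff N m - ∑ m ∈ Icc 1 N, fejerCoeff N m * t m := by
        rw [mul_sum, ← sum_sub_distrib]
        exact sum_congr rfl fun m _ => by ring
    _ = c * N - ∑ m ∈ Icc 1 N, fejerCoeff N m * t m := by rw [sum_fejerCoeff]; ring

section PowerSums

variable {w : ℕ → ℂ} (hw : ∀ k, ‖w k‖ ≤ 1) (hsum : Summable fun k => ‖w k‖)
include hw hsum

lemma summable_pow_of_norm_le_one {m : ℕ} (hm : m ≠ 0) : Summable fun k => w k ^ m :=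
  hsum.of_norm_bounded fun k => by rw [norm_pow]; exact pow_le_of_le_one (norm_nonneg _) (hw k) hm

lemma hasSum_re_sum_Icc_pow (b : ℕ → ℝ) (N : ℕ) :
    HasSum (fun k => (∑ m ∈ Icc 1 N, (b m : ℂ) * w k ^ m).re)
      (∑ m ∈ Icc 1 N, b m * (∑' k, w k ^ m).re) := by
  have h := hasSum_sum fun m (hm : m ∈ Icc 1 N) =>
    (summable_pow_of_norm_le_one hw hsum (Nat.one_le_iff_ne_zero.mp (mem_Icc.mp hm).1)).hasSum
      |>.mul_left (b m : ℂ)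
  simpa only [re_sum, re_ofReal_mul] using Complex.hasSum_re h

lemma neg_tsum_norm_le_of_hasSum {F : ℂ → ℂ} (hF : ∀ u ∈ closedBall (0 : ℂ) 1, -‖u‖ ≤ (F u).re)
    {S : ℝ} (h : HasSum (fun k => (F (w k)).re) S) : -∑' k, ‖w k‖ ≤ S :=
  hasSum_le (fun k => hF _ (mem_closedBall_zero_iff.mpr (hw k))) hsum.hasSum.neg h

lemma neg_tsum_norm_le_sum_fejerCoeff_mul (N : ℕ) :
    -∑' k, ‖w k‖ ≤ ∑ m ∈ Icc 1 N, fejerCoeff N m * (∑' k, w k ^ m).re :=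
  neg_tsum_norm_le_of_hasSum hw hsum
    (fun _ hu => neg_norm_le_re_of_neg_half_le_re (differentiable_fejerPoly N).differentiableOn
      (fejerPoly_zero_right N) (fun _ hv => neg_half_le_re_fejerPoly N hv) hu)
    (hasSum_re_sum_Icc_pow hw hsum _ N)

lemma sum_fejerCoeff_mul_mul_ge (hw0 : ‖w 0‖ = 1) (N : ℕ) :
    N / 4 + 3 / 4 - ∑' k, ‖w k‖
      ≤ ∑ m ∈ Icc 1 N, fejerCoeff N m * (w 0 ^ m).re * (∑' k, w k ^ m).re := by
  set f : ℂ → ℂ := fun u => (fejerPoly N (u * w 0) + fejerPoly N (u * conj (w 0))) / 2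
  have hf_half : ∀ u ∈ closedBall (0 : ℂ) 1, -(1 / 2) ≤ (f u).re := fun u hu => by
    have hmem : ∀ v : ℂ, ‖v‖ = 1 → u * v ∈ closedBall (0 : ℂ) 1 := fun v hv => by
      simpa [norm_mul, hv] using hu
    have h1 := neg_half_le_re_fejerPoly N (hmem _ hw0)
    have h2 := neg_half_le_re_fejerPoly N (hmem _ ((norm_conj _).trans hw0))
    simp only [f, div_ofNat_re, add_re]
    linarith
  have hfd : DifferentiableOn ℂ f (ball 0 1) := by
    simp only [f]; fun_prop
  have hf0 : f 0 = 0 := by simp [f, fejerPoly_zero_right]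
  have hf : ∀ u ∈ closedBall (0 : ℂ) 1, -‖u‖ ≤ (f u).re :=
    fun _ hu => neg_norm_le_re_of_neg_half_le_re hfd hf0 hf_half hu
  set X := ∑ m ∈ Icc 1 N, fejerCoeff N m * (w 0 ^ m).re * (∑' k, w k ^ m).re
  have hX : HasSum (fun k => (f (w k)).re) X := by
    simpa only [f, fejerPoly_mul_add_fejerPoly_mul_conj] using
      hasSum_re_sum_Icc_pow hw hsum (fun m => fejerCoeff N m * (w 0 ^ m).re) N
  have hhead : N / 4 - 1 / 4 ≤ (f (w 0)).re := by
    have hunit : w 0 * conj (w 0) = 1 := by rw [mul_conj, normSq_eq_norm_sq, hw0]; simp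
    have h := neg_half_le_re_fejerPoly N (by simp [hw0] : w 0 * w 0 ∈ closedBall (0 : ℂ) 1)
    simp only [f, hunit, fejerPoly_one_right, div_ofNat_re, add_re, natCast_re]
    linarith
  have htail : -∑' k, ‖w (k + 1)‖ ≤ X - (f (w 0)).re := by
    refine neg_tsum_norm_le_of_hasSum (fun k => hw (k + 1)) ((summable_nat_add_iff 1).mpr hsum)
      hf ?_
    simpa using (hasSum_nat_add_iff' 1).mpr hX
  rw [hsum.tsum_eq_zero_add, hw0]
  linarith

theorem le_eight_mul_tsum_norm_of_forall_re_tsum_pow_le (hw0 : ‖w 0‖ = 1) {N : ℕ} {c : ℝ}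
    (hc : 0 ≤ c) (ht : ∀ m ∈ Icc 1 N, (∑' k, w k ^ m).re ≤ c) :
    (1 - 4 * c) * N + 3 ≤ 8 * ∑' k, ‖w k‖ := by
  have hlower := sum_fejerCoeff_mul_mul_ge hw hsum hw0 N
  have hupper := sum_fejerCoeff_mul_mul_le hc (γ := fun m => (w 0 ^ m).re)
    (fun m => (abs_re_le_norm _).trans (by rw [norm_pow, hw0, one_pow])) ht
  have hfejer := neg_tsum_norm_le_sum_fejerCoeff_mul hw hsum N
  linarith

end PowerSums

lemma eight_mul_lt_of_floor {ε M : ℝ} (hε : 0 < ε) (hM : 0 ≤ M) :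
    8 * M < (1 - 4 * (ε / (48 + 5 * ε))) * ⌊(12 + ε) * M⌋₊ + 3 := by
  have hq : 1 - 4 * (ε / (48 + 5 * ε)) = (48 + ε) / (48 + 5 * ε) := by field_simp; ring
  have hq0 : 0 ≤ (48 + ε) / (48 + 5 * ε) := by positivity
  have hq1 : (48 + ε) / (48 + 5 * ε) ≤ 1 := by rw [div_le_one (by positivity)]; linarith
  have h8 : 8 ≤ (48 + ε) / (48 + 5 * ε) * (12 + ε) := by
    rw [div_mul_eq_mul_div, le_div_iff₀ (by positivity)]; nlinarith
  have hN := mul_le_mul_of_nonneg_left (Nat.sub_one_lt_floor ((12 + ε) * M)).le hq0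
  rw [hq]
  nlinarith [mul_le_mul_of_nonneg_right h8 hM]

/-- Power sum inequality: given `ε > 0` and an absolutely summable sequence `z`
(indexed from 1) of complex numbers with `z 1 ≠ 0` and `|z n| ≤ |z 1|` for all
`n ≥ 1`, setting `M = |z 1|⁻¹ ∑ₙ |z n|`, there exists `1 ≤ m₀ ≤ (12+ε)M` such
that `Re (∑ₙ (z n)^{m₀}) ≥ ε/(48+5ε) · |z 1|^{m₀}`. -/
theorem power_sum_inequality (ε : ℝ) (hε : 0 < ε) (z : ℕ → ℂ)
    (hz1 : z 1 ≠ 0)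
    (hbd : ∀ n : ℕ, 1 ≤ n → ‖z n‖ ≤ ‖z 1‖)
    (hsum : Summable fun n : ℕ => ‖z (n + 1)‖) :
    ∃ m₀ : ℕ, 1 ≤ m₀ ∧
      (m₀ : ℝ) ≤ (12 + ε) * ((∑' n : ℕ, ‖z (n + 1)‖) / ‖z 1‖) ∧
      (∑' n : ℕ, (z (n + 1)) ^ m₀).re ≥ ε / (48 + 5 * ε) * ‖z 1‖ ^ m₀ := by
  set r := ‖z 1‖
  have hr : 0 < r := norm_pos_iff.mpr hz1
  set w : ℕ → ℂ := fun k => z (k + 1) / r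
  have hnorm : ∀ k, ‖w k‖ = ‖z (k + 1)‖ / r := fun k => by simp [w, abs_of_pos hr]
  have hw : ∀ k, ‖w k‖ ≤ 1 := fun k => by rw [hnorm, div_le_one hr]; exact hbd _ k.succ_pos
  have hw0 : ‖w 0‖ = 1 := by rw [hnorm, div_self hr.ne']
  have hwsum : Summable fun k => ‖w k‖ := by simpa only [hnorm] using hsum.div_const r
  have hM : ∑' k, ‖w k‖ = (∑' n, ‖z (n + 1)‖) / r := by simp only [hnorm, tsum_div_const]
  have hre : ∀ m, (∑' k, w k ^ m).re = (∑' n, z (n + 1) ^ m).re / r ^ m := fun m => by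
    simp only [w, div_pow, tsum_div_const, ← ofReal_pow, div_ofReal_re]
  by_contra! h
  refine (eight_mul_lt_of_floor hε (tsum_nonneg fun k => norm_nonneg (w k))).not_ge
    (le_eight_mul_tsum_norm_of_forall_re_tsum_pow_le hw hwsum hw0 (by positivity) fun m hm => ?_)
  obtain ⟨hm1, hmN⟩ := mem_Icc.mp hm
  rw [hre, div_le_iff₀ (pow_pos hr m)]
  refine (h m hm1 ?_).le
  rw [← hM]
  exact (Nat.cast_le.mpr hmN).trans (Nat.floor_le (by positivity))
end

section
/- For every complex number $z = x + iy$ with $x > 0$, one has $\left| \frac{1 - e^{-z}}{z} \right|^2 \leq \left( \frac{1 - e^{-x}}{x} \right)^2$. -/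
/-! Both sides are integrals over `[0, 1]`: `(1 - e^{-z}) / z = ∫₀¹ e^{-tz} dt`, and the norm of the
integrand is `|e^{-tz}| = e^{-tx}`, whose integral is `(1 - e^{-x}) / x`. -/

theorem Complex.integral_zero_one_exp_neg_mul {z : ℂ} (hz : z ≠ 0) :
    ∫ t in (0 : ℝ)..1, exp (-z * t) = (1 - exp (-z)) / z := by
  rw [integral_exp_mul_complex (neg_ne_zero.mpr hz)]
  push_cast
  rw [mul_zero, exp_zero, mul_one]
  field_simp
  ring

theorem Real.integral_zero_one_exp_neg_mul {x : ℝ} (hx : x ≠ 0) :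
    ∫ t in (0 : ℝ)..1, Real.exp (-x * t) = (1 - Real.exp (-x)) / x := by
  have h := Complex.integral_zero_one_exp_neg_mul (Complex.ofReal_ne_zero.mpr hx)
  rw [← Complex.ofReal_inj, ← intervalIntegral.integral_ofReal]
  exact_mod_cast h

theorem Complex.norm_one_sub_exp_neg_div_le {z : ℂ} (hz : z.re ≠ 0) :
    ‖(1 - exp (-z)) / z‖ ≤ (1 - Real.exp (-z.re)) / z.re := by
  have hz0 : z ≠ 0 := fun h => hz (by simp [h])
  rw [← integral_zero_one_exp_neg_mul hz0, ← Real.integral_zero_one_exp_neg_mul hz]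
  calc ‖∫ t in (0 : ℝ)..1, exp (-z * t)‖
      ≤ ∫ t in (0 : ℝ)..1, ‖exp (-z * t)‖ :=
        intervalIntegral.norm_integral_le_integral_norm zero_le_one
    _ = ∫ t in (0 : ℝ)..1, Real.exp (-z.re * t) := by simp [norm_exp]

/-- For `z = x + iy` with `x > 0`, `|(1 - e^{-z})/z|² ≤ ((1 - e^{-x})/x)²`. -/
theorem abs_one_sub_exp_div_sq_le (z : ℂ) (hx : 0 < z.re) :
    ‖(1 - Complex.exp (-z)) / z‖ ^ 2
      ≤ ((1 - Real.exp (-z.re)) / z.re) ^ 2 :=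
  pow_le_pow_left₀ (norm_nonneg _) (Complex.norm_one_sub_exp_neg_div_le hx.ne') 2
end

section
/- Let $A, B > 0$, $\ell \geq 1$ an integer with $B > 2\ell A$, and let $F(z) = e^{-(B-2\ell A)z}\left(\frac{1-e^{-Az}}{Az}\right)^{2\ell}$. Let $\mathscr{L} \geq 1$ and let $s = \sigma + it$ be complex with $\sigma < 1$. Write $\sigma = 1 - x/\mathscr{L}$ and $t = y/\mathscr{L}$. Then for every real $\alpha$ with $0 \leq \alpha \leq 2\ell$, $|F((1-s)\mathscr{L})| \leq e^{-(B-2\ell A)x} \left(\frac{2}{A\sqrt{x^2+y^2}}\right)^{\alpha}$. -/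
/-!
On the closed right half-plane `|1 - e^{-w}| ≤ min(|w|, 2)` (mean value theorem, since
`|e^{-u}| ≤ 1` there), so the factor `(1 - e^{-w})/w` has modulus at most `min(1, 2/|w|)`.
A number in `[0, 1]` only grows when its exponent drops from `2ℓ` to `α`, which trades the
`2ℓ`-th power of this factor for the `α`-th power of `2/|Az|`; the exponential factor has
modulus exactly `e^{-(B-2ℓA)x}` because `Re((1-s)ℒ) = x`.
-/

open Complex

namespace Complex

theorem norm_exp_sub_one_le_norm_of_re_nonpos {w : ℂ} (hw : w.re ≤ 0) :
    ‖exp w - 1‖ ≤ ‖w‖ := by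
  have hderiv : ∀ u ∈ {c : ℂ | c.re ≤ 0}, ‖deriv exp u‖ ≤ 1 := fun u hu => by
    simpa [norm_exp] using hu
  simpa [exp_zero] using
    (convex_halfSpace_re_le 0).norm_image_sub_le_of_norm_deriv_le
      (fun u _ => differentiableAt_exp) hderiv (show (0 : ℂ) ∈ {c : ℂ | c.re ≤ 0} by simp)
      hw

theorem norm_exp_sub_one_le_two_of_re_nonpos {w : ℂ} (hw : w.re ≤ 0) :
    ‖exp w - 1‖ ≤ 2 :=
  calc ‖exp w - 1‖ ≤ ‖exp w‖ + ‖(1 : ℂ)‖ := norm_sub_le _ _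
    _ ≤ 1 + 1 := by gcongr <;> simp [norm_exp, hw]
    _ = 2 := by norm_num

theorem norm_one_sub_exp_neg_div_le_s10 {w : ℂ} (hw : 0 ≤ w.re) :
    ‖(1 - exp (-w)) / w‖ ≤ min 1 (2 / ‖w‖) := by
  have hw' : (-w).re ≤ 0 := by simpa using hw
  rw [norm_div, norm_sub_rev]
  refine le_min ?_ (div_le_div_of_nonneg_right (norm_exp_sub_one_le_two_of_re_nonpos hw')
    (norm_nonneg w))
  exact (div_le_div_of_nonneg_right (norm_exp_sub_one_le_norm_of_re_nonpos hw')
    (norm_nonneg w)).trans (by simpa using div_self_le_one ‖w‖)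

end Complex

theorem Real.pow_le_rpow_of_le_one_of_le {r c α : ℝ} {n : ℕ} (hr0 : 0 ≤ r) (hr1 : r ≤ 1)
    (hrc : r ≤ c) (hα0 : 0 ≤ α) (hαn : α ≤ n) : r ^ n ≤ c ^ α :=
  calc r ^ n = r ^ (n : ℝ) := (rpow_natCast r n).symm
    _ ≤ r ^ α := rpow_le_rpow_of_exponent_ge' hr0 hr1 hα0 hαn
    _ ≤ c ^ α := rpow_le_rpow hr0 hrc hα0

theorem laplace_weight_decay_general (A B : ℝ) (hA : 0 < A)
    (ℓ : ℕ)
    (F : ℂ → ℂ)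
    (hF : F = fun z => Complex.exp (-((B - 2 * ℓ * A) * z))
        * ((1 - Complex.exp (-(A * z))) / (A * z)) ^ (2 * ℓ))
    (ℒ : ℝ) (hℒ : 1 ≤ ℒ) (s : ℂ) (hσ : s.re < 1)
    (x y : ℝ) (hx : x = (1 - s.re) * ℒ) (hy : y = s.im * ℒ)
    (α : ℝ) (hα0 : 0 ≤ α) (hα : α ≤ 2 * ℓ) :
    ‖F ((1 - s) * ℒ)‖
      ≤ Real.exp (-((B - 2 * ℓ * A) * x))
          * (2 / (A * Real.sqrt (x ^ 2 + y ^ 2))) ^ α := by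
  set z : ℂ := (1 - s) * ℒ
  have hz_re : z.re = x := by simp [z, hx]
  have hz_norm : ‖z‖ = Real.sqrt (x ^ 2 + y ^ 2) := by
    rw [norm_def, normSq_apply, hz_re]
    congr 1
    simp [z, hy]
    ring
  have hAz_re : 0 ≤ ((A : ℂ) * z).re := by
    simpa [hz_re, hx] using mul_nonneg hA.le (mul_nonneg (by linarith) (by linarith))
  have hAz_norm : ‖(A : ℂ) * z‖ = A * Real.sqrt (x ^ 2 + y ^ 2) := by
    rw [norm_mul, norm_real, Real.norm_of_nonneg hA.le, hz_norm]
  have hexp : ‖exp (-((B - 2 * ℓ * A) * z))‖ = Real.exp (-((B - 2 * ℓ * A) * x)) := by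
    simp [norm_exp, hz_re]
  have hratio := le_min_iff.1 (norm_one_sub_exp_neg_div_le_s10 hAz_re)
  rw [hF, norm_mul, norm_pow, hexp, ← hAz_norm]
  gcongr
  exact Real.pow_le_rpow_of_le_one_of_le (norm_nonneg _) hratio.1 hratio.2 hα0
    (by exact_mod_cast hα)

/-- Bound on the Laplace transform `F(z) = e^{-(B-2ℓA)z}((1-e^{-Az})/(Az))^{2ℓ}`
at `z = (1-s)ℒ`: writing `σ = 1 - x/ℒ < 1` and `t = y/ℒ`, for any
`0 ≤ α ≤ 2ℓ` one has `|F((1-s)ℒ)| ≤ e^{-(B-2ℓA)x} (2/(A√(x²+y²)))^α`. -/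
theorem laplace_weight_decay (A B : ℝ) (hA : 0 < A) (hB : 0 < B)
    (ℓ : ℕ) (hℓ : 1 ≤ ℓ) (hBA : 2 * ℓ * A < B)
    (F : ℂ → ℂ)
    (hF : F = fun z => Complex.exp (-((B - 2 * ℓ * A) * z))
        * ((1 - Complex.exp (-(A * z))) / (A * z)) ^ (2 * ℓ))
    (ℒ : ℝ) (hℒ : 1 ≤ ℒ) (s : ℂ) (hσ : s.re < 1)
    (x y : ℝ) (hx : x = (1 - s.re) * ℒ) (hy : y = s.im * ℒ)
    (α : ℝ) (hα0 : 0 ≤ α) (hα : α ≤ 2 * ℓ) :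
    ‖F ((1 - s) * ℒ)‖
      ≤ Real.exp (-((B - 2 * ℓ * A) * x))
          * (2 / (A * Real.sqrt (x ^ 2 + y ^ 2))) ^ α :=
  laplace_weight_decay_general A B hA ℓ F hF ℒ hℒ s hσ x y hx hy α hα0 hα
end

section
/- For each fixed $x > 0$, the function $\Phi_x(y) = \frac{1 + e^{-2x} - 2e^{-x}\cos y}{x^2 + y^2}$ of $y \geq 0$ attains its global maximum on $[0,\infty)$ at $y = 0$, i.e. $\Phi_x(y) \leq \Phi_x(0)$ for all $y \geq 0$. -/
lemma key_ineq (x : ℝ) (hx : 0 < x) :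
    x ^ 2 * Real.exp (-x) ≤ (1 - Real.exp (-x)) ^ 2 := by
  have h : x / 2 < Real.sinh (x / 2) := Real.self_lt_sinh_iff.mpr (by linarith)
  rw [Real.sinh_eq] at h
  have hkey : x * Real.exp (-(x / 2)) ≤ 1 - Real.exp (-x) := by
    have he : Real.exp (x / 2) * Real.exp (-(x / 2)) = 1 := by
      rw [← Real.exp_add]; simp
    have he2 : Real.exp (-(x / 2)) * Real.exp (-(x / 2)) = Real.exp (-x) := by
      rw [← Real.exp_add]; ring_nf
    nlinarith [Real.exp_pos (-(x/2))]
  have h2 : (x * Real.exp (-(x / 2))) ^ 2 ≤ (1 - Real.exp (-x)) ^ 2 := by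
    have hpos : 0 ≤ x * Real.exp (-(x / 2)) := by positivity
    nlinarith
  have he2 : Real.exp (-(x / 2)) * Real.exp (-(x / 2)) = Real.exp (-x) := by
    rw [← Real.exp_add]; ring_nf
  nlinarith

/-- For fixed `x > 0`, the function `Φ_x(y) = (1 + e^{-2x} - 2e^{-x}cos y)/(x² + y²)`
attains its global maximum on `[0,∞)` at `y = 0`. -/
theorem phi_max_at_zero (x : ℝ) (hx : 0 < x) (y : ℝ) (hy : 0 ≤ y) :
    (1 + Real.exp (-(2 * x)) - 2 * Real.exp (-x) * Real.cos y) / (x ^ 2 + y ^ 2)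
      ≤ (1 + Real.exp (-(2 * x)) - 2 * Real.exp (-x) * Real.cos 0) / (x ^ 2 + 0 ^ 2) := by
  have hcos : 1 - y ^ 2 / 2 ≤ Real.cos y := Real.one_sub_sq_div_two_le_cos
  have hkey := key_ineq x hx
  have he : Real.exp (-(2 * x)) = Real.exp (-x) ^ 2 := by
    rw [← Real.exp_nat_mul]; ring_nf
  have hd1 : (0:ℝ) < x ^ 2 + y ^ 2 := by positivity
  have hd2 : (0:ℝ) < x ^ 2 + 0 ^ 2 := by positivity
  rw [div_le_div_iff₀ hd1 hd2, Real.cos_zero]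
  have hcos1 : Real.cos y ≤ 1 := Real.cos_le_one y
  nlinarith [Real.exp_pos (-x), sq_nonneg y, sq_nonneg (1 - Real.exp (-x)),
    mul_nonneg (sq_nonneg y) (Real.exp_pos (-x)).le]
end
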